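/- For each positive zero j of J₁ and constants A, α, ν > 0, the function ω(r,t) = A e^{−(j²ν/(1 + j²α²)) t} J₀(j r) satisfies the equation ω_t − α²Δω_t − νΔω = 0 on (0,1)×(0,T), where Δω = ω_rr + (1/r)ω_r, and the boundary condition ∫₀¹ r ω(r,t) dr = 0 for all t. -/

import Mathlib

/-!
With `z = x²/4`, the series give `J₀(x) = F(z)` and `J₁(x) = (x/2) G(z)` for the entire power
series `F = ∑ (-1)ⁿ zⁿ/(n!)²` and `G = ∑ (-1)ⁿ zⁿ/(n! (n+1)!)`. Differentiating termwise,
`F' = -G` and `(z G)' = F`, that is `J₀' = -J₁` and `(x J₁)' = x J₀`. Hence `ρ ↦ J₀(jρ)` is an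
eigenfunction of the radial Laplacian with eigenvalue `-j²`, so the mode `e^{μt} J₀(jr)` solves
the equation exactly when `μ (1 + α² j²) = -ν j²`; and `∫₀¹ r J₀(jr) dr = J₁(j)/j` vanishes
because `J₁(j) = 0`.
-/

/-- The Bessel function of the first kind of order `0`. -/
noncomputable def besselJ0 (x : ℝ) : ℝ :=
  ∑' m : ℕ, (-1) ^ m * x ^ (2 * m) / (2 ^ (2 * m) * (Nat.factorial m : ℝ) ^ 2)

/-- The Bessel function of the first kind of order `1`. -/
noncomputable def besselJ1 (x : ℝ) : ℝ :=
  ∑' m : ℕ, (-1) ^ m * x ^ (2 * m + 1) /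
    (2 ^ (2 * m + 1) * (Nat.factorial m : ℝ) * (Nat.factorial (m + 1) : ℝ))

/-- The radial Laplacian `f'' + (1/r) f'`. -/
noncomputable def radialLaplacian (f : ℝ → ℝ) (r : ℝ) : ℝ :=
  deriv (deriv f) r + (1 / r) * deriv f r

open Nat Topology

section PowerSeries

variable {c : ℕ → ℝ}

theorem summable_mul_pow_of_abs_le_inv_factorial (hc : ∀ n, |c n| ≤ 1 / n !) (x : ℝ) :
    Summable fun n => c n * x ^ n := by
  refine .of_norm_bounded (Real.summable_pow_div_factorial |x|) fun n => ?_
  rw [norm_mul, norm_pow, Real.norm_eq_abs, Real.norm_eq_abs, div_eq_mul_one_div, mul_comm]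
  gcongr
  exact hc n

theorem summable_natCast_mul_abs_mul_pow_pred (hc : ∀ x, Summable fun n => c n * x ^ n)
    {R : ℝ} (hR : 0 ≤ R) : Summable fun n => n * |c n| * R ^ (n - 1) := by
  refine .of_nonneg_of_le (fun n => by positivity) (fun n => ?_) (hc (2 * (R + 1))).abs
  have hn : (n : ℝ) ≤ 2 ^ n := by exact_mod_cast Nat.lt_two_pow_self.le
  have hpow : R ^ (n - 1) ≤ (R + 1) ^ n :=
    calc R ^ (n - 1) ≤ (R + 1) ^ (n - 1) := by gcongr; linarith
      _ ≤ (R + 1) ^ n := pow_le_pow_right₀ (by linarith) (Nat.sub_le n 1)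
  calc n * |c n| * R ^ (n - 1) = |c n| * (n * R ^ (n - 1)) := by ring
    _ ≤ |c n| * (2 ^ n * (R + 1) ^ n) := by gcongr
    _ = |c n * (2 * (R + 1)) ^ n| := by
      rw [abs_mul, abs_of_nonneg (by positivity : (0 : ℝ) ≤ (2 * (R + 1)) ^ n), mul_pow]

theorem hasDerivAt_tsum_mul_pow (hc : ∀ x, Summable fun n => c n * x ^ n) (x : ℝ) :
    HasDerivAt (fun y => ∑' n, c n * y ^ n) (∑' n, (n + 1) * c (n + 1) * x ^ n) x := by
  set R := |x| + 1
  have hbound : ∀ n, ∀ y ∈ Set.Ioo (-R) R,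
      ‖c n * (n * y ^ (n - 1))‖ ≤ n * |c n| * R ^ (n - 1) := by
    intro n y hy
    simp only [norm_mul, norm_pow, Real.norm_eq_abs, Nat.abs_cast]
    rw [← mul_assoc, mul_comm |c n|]
    gcongr
    exact (abs_lt.mpr hy).le
  have hsum := summable_natCast_mul_abs_mul_pow_pred hc (by positivity : 0 ≤ R)
  have hx : x ∈ Set.Ioo (-R) R := abs_lt.mp (by linarith)
  have hderiv := hasDerivAt_tsum_of_isPreconnected hsum isOpen_Ioo isPreconnected_Ioo
    (fun n y _ => (hasDerivAt_pow n y).const_mul (c n)) hbound hx (hc x) hx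
  rw [(Summable.of_norm_bounded hsum fun n => hbound n x hx).tsum_eq_zero_add] at hderiv
  refine hderiv.congr_deriv ?_
  simp only [CharP.cast_eq_zero, zero_mul, mul_zero, zero_add, Nat.add_sub_cancel, Nat.cast_succ]
  exact tsum_congr fun n => by ring

end PowerSeries

noncomputable def besselJ0Coeff (n : ℕ) : ℝ := (-1) ^ n / (n ! : ℝ) ^ 2

noncomputable def besselJ1Coeff (n : ℕ) : ℝ := (-1) ^ n / ((n ! : ℝ) * (n + 1)!)

theorem abs_besselJ0Coeff_le (n : ℕ) : |besselJ0Coeff n| ≤ 1 / n ! := by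
  have h1 : (1 : ℝ) ≤ n ! := by exact_mod_cast n.factorial_pos
  rw [besselJ0Coeff, abs_div, abs_pow, abs_neg, abs_one, one_pow, abs_of_pos (by positivity)]
  exact one_div_le_one_div_of_le (by positivity) (by nlinarith)

theorem abs_besselJ1Coeff_le (n : ℕ) : |besselJ1Coeff n| ≤ 1 / n ! := by
  have h1 : (1 : ℝ) ≤ n ! := by exact_mod_cast n.factorial_pos
  have h2 : (1 : ℝ) ≤ (n + 1)! := by exact_mod_cast (n + 1).factorial_pos
  rw [besselJ1Coeff, abs_div, abs_pow, abs_neg, abs_one, one_pow, abs_of_pos (by positivity)]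
  exact one_div_le_one_div_of_le (by positivity) (by nlinarith)

theorem succ_mul_besselJ0Coeff_succ (n : ℕ) :
    (n + 1) * besselJ0Coeff (n + 1) = -besselJ1Coeff n := by
  rw [besselJ0Coeff, besselJ1Coeff, Nat.factorial_succ]
  push_cast
  field_simp
  ring

theorem besselJ0Coeff_sub_besselJ1Coeff (n : ℕ) :
    besselJ0Coeff n - besselJ1Coeff n = n * besselJ1Coeff n := by
  rw [besselJ0Coeff, besselJ1Coeff, Nat.factorial_succ]
  push_cast
  field_simp
  ring

theorem besselJ0_eq_tsum (x : ℝ) : besselJ0 x = ∑' n, besselJ0Coeff n * (x ^ 2 / 4) ^ n := by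
  refine tsum_congr fun n => ?_
  rw [besselJ0Coeff, div_pow, ← pow_mul, pow_mul (2 : ℝ)]
  norm_num
  ring

theorem besselJ1_eq_tsum (x : ℝ) :
    besselJ1 x = x / 2 * ∑' n, besselJ1Coeff n * (x ^ 2 / 4) ^ n := by
  rw [besselJ1, ← tsum_mul_left]
  refine tsum_congr fun n => ?_
  rw [besselJ1Coeff, div_pow, ← pow_mul, pow_succ (2 : ℝ), pow_mul (2 : ℝ), pow_succ x]
  norm_num
  ring

theorem summable_besselJ0Coeff_mul_pow (z : ℝ) : Summable fun n => besselJ0Coeff n * z ^ n :=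
  summable_mul_pow_of_abs_le_inv_factorial abs_besselJ0Coeff_le z

theorem summable_besselJ1Coeff_mul_pow (z : ℝ) : Summable fun n => besselJ1Coeff n * z ^ n :=
  summable_mul_pow_of_abs_le_inv_factorial abs_besselJ1Coeff_le z

theorem hasDerivAt_tsum_besselJ0Coeff (z : ℝ) :
    HasDerivAt (fun w => ∑' n, besselJ0Coeff n * w ^ n) (-∑' n, besselJ1Coeff n * z ^ n) z :=
  (hasDerivAt_tsum_mul_pow summable_besselJ0Coeff_mul_pow z).congr_deriv <| by
    simp_rw [succ_mul_besselJ0Coeff_succ, neg_mul, tsum_neg]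

theorem hasDerivAt_mul_tsum_besselJ1Coeff (z : ℝ) :
    HasDerivAt (fun w => w * ∑' n, besselJ1Coeff n * w ^ n)
      (∑' n, besselJ0Coeff n * z ^ n) z := by
  refine ((hasDerivAt_id z).mul
    (hasDerivAt_tsum_mul_pow summable_besselJ1Coeff_mul_pow z)).congr_deriv ?_
  have hsummable : Summable fun n => n * besselJ1Coeff n * z ^ n := by
    refine ((summable_besselJ0Coeff_mul_pow z).sub (summable_besselJ1Coeff_mul_pow z)).congr
      fun n => ?_
    rw [← sub_mul, besselJ0Coeff_sub_besselJ1Coeff]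
  have hshift : ∑' n, n * besselJ1Coeff n * z ^ n
      = z * ∑' n, (n + 1) * besselJ1Coeff (n + 1) * z ^ n := by
    rw [hsummable.tsum_eq_zero_add, ← tsum_mul_left]
    simp only [CharP.cast_eq_zero, zero_mul, zero_add, Nat.cast_succ]
    exact tsum_congr fun n => by ring
  have hsub := (summable_besselJ0Coeff_mul_pow z).tsum_sub (summable_besselJ1Coeff_mul_pow z)
  simp only [← sub_mul, besselJ0Coeff_sub_besselJ1Coeff, hshift] at hsub
  rw [id, hsub]
  ring

theorem hasDerivAt_sq_div_four (x : ℝ) : HasDerivAt (fun y : ℝ => y ^ 2 / 4) (x / 2) x :=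
  ((hasDerivAt_pow 2 x).div_const 4).congr_deriv (by ring)

theorem hasDerivAt_besselJ0 (x : ℝ) : HasDerivAt besselJ0 (-besselJ1 x) x := by
  rw [show besselJ0 = _ from funext besselJ0_eq_tsum, besselJ1_eq_tsum]
  exact ((hasDerivAt_tsum_besselJ0Coeff _).comp x (hasDerivAt_sq_div_four x)).congr_deriv
    (by ring)

theorem hasDerivAt_mul_besselJ1 (x : ℝ) :
    HasDerivAt (fun y => y * besselJ1 y) (x * besselJ0 x) x := by
  have hfun : (fun y => y * besselJ1 y)
      = fun y => 2 * (y ^ 2 / 4 * ∑' n, besselJ1Coeff n * (y ^ 2 / 4) ^ n) :=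
    funext fun y => by rw [besselJ1_eq_tsum]; ring
  rw [hfun, besselJ0_eq_tsum]
  exact (((hasDerivAt_mul_tsum_besselJ1Coeff _).comp x (hasDerivAt_sq_div_four x)).const_mul
    2).congr_deriv (by ring)

theorem hasDerivAt_besselJ1 {x : ℝ} (hx : x ≠ 0) :
    HasDerivAt besselJ1 (besselJ0 x - besselJ1 x / x) x := by
  have hquot := (hasDerivAt_mul_besselJ1 x).div (hasDerivAt_id x) hx
  have hev : besselJ1 =ᶠ[𝓝 x] fun y => y * besselJ1 y / id y := by
    filter_upwards [eventually_ne_nhds hx] with y hy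
    rw [id, mul_div_cancel_left₀ _ hy]
  refine (hquot.congr_of_eventuallyEq hev).congr_deriv ?_
  simp only [id]
  field_simp

theorem continuous_besselJ0 : Continuous besselJ0 :=
  continuous_iff_continuousAt.2 fun x => (hasDerivAt_besselJ0 x).continuousAt

theorem radialLaplacian_const_mul (c : ℝ) (f : ℝ → ℝ) (r : ℝ) :
    radialLaplacian (fun ρ => c * f ρ) r = c * radialLaplacian f r := by
  simp only [radialLaplacian, deriv_const_mul_field']
  ring

theorem radialLaplacian_besselJ0_comp_mul {j r : ℝ} (hj : j ≠ 0) (hr : r ≠ 0) :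
    radialLaplacian (fun ρ => besselJ0 (j * ρ)) r = -j ^ 2 * besselJ0 (j * r) := by
  have hderiv : deriv (fun ρ => besselJ0 (j * ρ)) = fun ρ => -j * besselJ1 (j * ρ) :=
    funext fun ρ => (((hasDerivAt_besselJ0 (j * ρ)).comp ρ
      (hasDerivAt_const_mul j)).congr_deriv (by ring)).deriv
  have hderiv2 : HasDerivAt (fun ρ => -j * besselJ1 (j * ρ))
      (-j * ((besselJ0 (j * r) - besselJ1 (j * r) / (j * r)) * j)) r :=
    ((hasDerivAt_besselJ1 (mul_ne_zero hj hr)).comp r (hasDerivAt_const_mul j)).const_mul (-j)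
  rw [radialLaplacian, hderiv, hderiv2.deriv]
  field_simp
  ring

theorem integral_mul_besselJ0_comp_mul {j : ℝ} (hj : j ≠ 0) :
    ∫ r in (0 : ℝ)..1, r * besselJ0 (j * r) = besselJ1 j / j := by
  have hprim : ∀ r ∈ Set.uIcc (0 : ℝ) 1,
      HasDerivAt (fun ρ => j * ρ * besselJ1 (j * ρ) / j ^ 2) (r * besselJ0 (j * r)) r :=
    fun r _ => (((hasDerivAt_mul_besselJ1 (j * r)).comp r (hasDerivAt_const_mul j)).div_const
      (j ^ 2)).congr_deriv (by field_simp)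
  have hint : IntervalIntegrable (fun r => r * besselJ0 (j * r)) MeasureTheory.volume 0 1 :=
    Continuous.intervalIntegrable
      (continuous_id.mul (continuous_besselJ0.comp (continuous_const.mul continuous_id))) 0 1
  rw [intervalIntegral.integral_eq_sub_of_hasDerivAt hprim hint]
  field_simp
  simp

theorem separated_mode_solves_equation_general
    (A α ν T j : ℝ) (hj : 0 < j) (hj1 : besselJ1 j = 0)
    (ω : ℝ → ℝ → ℝ)
    (hω : ∀ r t, ω r t =
      A * Real.exp (-(j ^ 2 * ν / (1 + j ^ 2 * α ^ 2)) * t) * besselJ0 (j * r)) :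
    (∀ r ∈ Set.Ioo (0:ℝ) 1, ∀ t ∈ Set.Ioo (0:ℝ) T,
      deriv (fun s => ω r s) t
        - α ^ 2 * radialLaplacian (fun ρ => deriv (fun s => ω ρ s) t) r
        - ν * radialLaplacian (fun ρ => ω ρ t) r = 0) ∧
    (∀ t : ℝ, (∫ r in (0:ℝ)..1, r * ω r t) = 0) := by
  set μ := -(j ^ 2 * ν / (1 + j ^ 2 * α ^ 2)) with hμ
  have hωt : ∀ ρ t, deriv (fun s => ω ρ s) t = μ * ω ρ t := by
    intro ρ t
    have h : HasDerivAt (fun s => A * Real.exp (μ * s) * besselJ0 (j * ρ))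
        (A * (Real.exp (μ * t) * μ) * besselJ0 (j * ρ)) t :=
      (((Real.hasDerivAt_exp (μ * t)).comp t (hasDerivAt_const_mul μ)).const_mul A).mul_const _
    rw [show (fun s => ω ρ s) = _ from funext (hω ρ), h.deriv, hω]
    ring
  refine ⟨fun r hr t _ => ?_, fun t => ?_⟩
  · have hmode : (fun ρ => ω ρ t) = fun ρ => A * Real.exp (μ * t) * besselJ0 (j * ρ) :=
      funext fun ρ => hω ρ t
    have hmode' : (fun ρ => deriv (fun s => ω ρ s) t)
        = fun ρ => μ * (A * Real.exp (μ * t)) * besselJ0 (j * ρ) :=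
      funext fun ρ => by rw [hωt, hω]; ring
    rw [hmode', hmode, radialLaplacian_const_mul, radialLaplacian_const_mul,
      radialLaplacian_besselJ0_comp_mul hj.ne' hr.1.ne', hωt, hω]
    have hden : 1 + j ^ 2 * α ^ 2 ≠ 0 := by positivity
    rw [hμ]
    field_simp
    ring
  · simp_rw [hω, mul_left_comm _ (A * _), intervalIntegral.integral_const_mul,
      integral_mul_besselJ0_comp_mul hj.ne', hj1, zero_div, mul_zero]

theorem separated_mode_solves_equation
    (A α ν T j : ℝ) (hA : 0 < A) (hα : 0 < α) (hν : 0 < ν) (hT : 0 < T)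
    (hj : 0 < j) (hj1 : besselJ1 j = 0)
    (ω : ℝ → ℝ → ℝ)
    (hω : ∀ r t, ω r t =
      A * Real.exp (-(j ^ 2 * ν / (1 + j ^ 2 * α ^ 2)) * t) * besselJ0 (j * r)) :
    (∀ r ∈ Set.Ioo (0:ℝ) 1, ∀ t ∈ Set.Ioo (0:ℝ) T,
      deriv (fun s => ω r s) t
        - α ^ 2 * radialLaplacian (fun ρ => deriv (fun s => ω ρ s) t) r
        - ν * radialLaplacian (fun ρ => ω ρ t) r = 0) ∧
    (∀ t : ℝ, (∫ r in (0:ℝ)..1, r * ω r t) = 0) :=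
  separated_mode_solves_equation_general A α ν T j hj hj1 ω hω
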